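/- arXiv:math/0510468 — 11 statements merged into one kernel-verified Lean document; each statement's English description precedes it below -/
import Mathlib

section
/- Let n ≥ 2 and let f : ℝ → ℝ be twice continuously differentiable on (−∞,0) with f′(t) > 0 and f′(t) + t·f″(t) < 0 for every t < 0. Then for every Z ∈ ℂⁿ with h(Z,Z) < 0 and every W ∈ ℂⁿ with W ≠ 0 one has f′(h(Z,Z))·h(W,W) + f″(h(Z,Z))·|h(W,Z)|² > 0; that is, the Hermitian form of the Kähler metric g = ∂∂̄ f(−r²) is positive definite on the time-like domain 𝕋. -/
open scoped ComplexConjugate BigOperators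

/-- The flat Kähler–Lorentz Hermitian form on ℂⁿ:
`h(Z,W) = Σ_{j<n-1} z_j conj(w_j) − z_{n-1} conj(w_{n-1})` (complex signature (n−1,1)). -/
noncomputable def herm (n : ℕ) (Z W : Fin n → ℂ) : ℂ :=
  ∑ j : Fin n, (if (j : ℕ) < n - 1 then (1 : ℂ) else -1) * (Z j * conj (W j))


namespace KahlerAux

variable {n : ℕ}

lemma herm_sub_left (A B C : Fin n → ℂ) :
    herm n (A - B) C = herm n A C - herm n B C := by
  simp [herm, Pi.sub_apply, mul_sub, sub_mul, Finset.sum_sub_distrib]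

lemma herm_add_left (A B C : Fin n → ℂ) :
    herm n (A + B) C = herm n A C + herm n B C := by
  simp [herm, Pi.add_apply, add_mul, mul_add, Finset.sum_add_distrib]

lemma herm_smul_left (c : ℂ) (A B : Fin n → ℂ) :
    herm n (c • A) B = c * herm n A B := by
  simp only [herm, Pi.smul_apply, smul_eq_mul, Finset.mul_sum]
  exact Finset.sum_congr rfl fun j _ => by ring

lemma herm_conj (A B : Fin n → ℂ) : conj (herm n A B) = herm n B A := by
  simp only [herm, map_sum]
  refine Finset.sum_congr rfl fun j _ => ?_
  by_cases h : (j : ℕ) < n - 1 <;> simp [h] <;> ring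

lemma herm_smul_right (c : ℂ) (A B : Fin n → ℂ) :
    herm n A (c • B) = conj c * herm n A B := by
  rw [← herm_conj, herm_smul_left, map_mul, herm_conj]

lemma herm_add_right (A B C : Fin n → ℂ) :
    herm n A (B + C) = herm n A B + herm n A C := by
  rw [← herm_conj, herm_add_left, map_add, herm_conj, herm_conj]

lemma herm_self_re (A : Fin n → ℂ) : herm n A A = ((herm n A A).re : ℂ) := by
  have h := herm_conj A A
  exact (Complex.conj_eq_iff_re.mp h) |>.symm ▸ rfl

end KahlerAux

namespace KahlerAux

lemma herm_split (hn : 1 ≤ n) (A B : Fin n → ℂ) :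
    herm n A B = (∑ j ∈ Finset.univ.filter (fun j : Fin n => (j : ℕ) < n - 1),
        A j * conj (B j)) - A ⟨n-1, by omega⟩ * conj (B ⟨n-1, by omega⟩) := by
  classical
  have hfilter : Finset.univ.filter (fun j : Fin n => ¬ (j : ℕ) < n - 1)
      = {(⟨n-1, by omega⟩ : Fin n)} := by
    ext j
    simp only [Finset.mem_filter, Finset.mem_univ, true_and, Finset.mem_singleton]
    constructor
    · intro h
      have := j.isLt
      exact Fin.ext (show (j : ℕ) = n - 1 by omega)
    · intro h; subst h; simp
  rw [herm, ← Finset.sum_filter_add_sum_filter_not Finset.univ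
      (fun j : Fin n => (j : ℕ) < n - 1)]
  rw [hfilter]
  simp only [Finset.sum_singleton]
  rw [Finset.sum_congr rfl (fun j hj => by
    rw [if_pos (Finset.mem_filter.mp hj).2, one_mul])]
  have : ¬ ((n-1 : ℕ) < n - 1) := lt_irrefl _
  rw [if_neg this]
  ring

/-- If `V` is `h`-orthogonal to a time-like `Z` and `V ≠ 0`, then `V` is space-like. -/
lemma spacelike (hn : 1 ≤ n) (Z V : Fin n → ℂ) (hZ : (herm n Z Z).re < 0)
    (horth : herm n V Z = 0) (hV : V ≠ 0) : 0 < (herm n V V).re := by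
  classical
  set l : Fin n := ⟨n-1, by omega⟩ with hl
  set s : Finset (Fin n) := Finset.univ.filter (fun j : Fin n => (j : ℕ) < n - 1) with hs
  have hZsplit := herm_split hn Z Z
  have hVsplit := herm_split hn V V
  have hVZsplit := herm_split hn V Z
  -- real quantities
  set P : ℝ := ∑ j ∈ s, Complex.normSq (V j) with hP
  set Q : ℝ := ∑ j ∈ s, Complex.normSq (Z j) with hQ
  have hsumZ : (∑ j ∈ s, Z j * conj (Z j)) = (Q : ℂ) := by
    push_cast [hQ]
    exact Finset.sum_congr rfl fun j _ => (Complex.mul_conj (Z j))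
  have hsumV : (∑ j ∈ s, V j * conj (V j)) = (P : ℂ) := by
    push_cast [hP]
    exact Finset.sum_congr rfl fun j _ => (Complex.mul_conj (V j))
  have hQlt : Q < Complex.normSq (Z l) := by
    have : (herm n Z Z).re = Q - Complex.normSq (Z l) := by
      rw [hZsplit, hsumZ]
      simp [Complex.mul_conj]
      rfl
    linarith [this ▸ hZ]
  have hzl : Z l ≠ 0 := by
    intro h
    rw [h] at hQlt
    simp at hQlt
    have : 0 ≤ Q := Finset.sum_nonneg fun j _ => Complex.normSq_nonneg _
    linarith
  -- orthogonality gives: spatial inner product = V l * conj (Z l)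
  have horth' : (∑ j ∈ s, V j * conj (Z j)) = V l * conj (Z l) := by
    have := hVZsplit ▸ horth
    linear_combination this
  -- Cauchy-Schwarz
  have hCS : Complex.normSq (V l) * Complex.normSq (Z l) ≤ P * Q := by
    have h1 : ‖∑ j ∈ s, V j * conj (Z j)‖ ≤
        ∑ j ∈ s, ‖V j‖ * ‖Z j‖ := by
      refine (norm_sum_le _ _).trans_eq ?_
      exact Finset.sum_congr rfl fun j _ => by
        simp [map_mul]
    have h2 : (∑ j ∈ s, ‖V j‖ * ‖Z j‖)^2 ≤
        (∑ j ∈ s, ‖V j‖^2) * ∑ j ∈ s, ‖Z j‖^2 :=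
      Finset.sum_mul_sq_le_sq_mul_sq s _ _
    have h3 : ‖V l * conj (Z l)‖ = ‖V l‖ * ‖Z l‖ := by
      simp [map_mul]
    have h4 : ‖V l‖ * ‖Z l‖ ≤
        ∑ j ∈ s, ‖V j‖ * ‖Z j‖ := by
      rw [← h3, ← horth']; exact h1
    have h5 := pow_le_pow_left₀ (by positivity) h4 2
    calc Complex.normSq (V l) * Complex.normSq (Z l)
        = (‖V l‖ * ‖Z l‖)^2 := by
          rw [mul_pow]; simp [Complex.sq_norm]
      _ ≤ (∑ j ∈ s, ‖V j‖ * ‖Z j‖)^2 := h5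
      _ ≤ (∑ j ∈ s, ‖V j‖^2) * ∑ j ∈ s, ‖Z j‖^2 := h2
      _ = P * Q := by simp [hP, hQ, Complex.sq_norm]
  have hPpos : 0 < P := by
    rcases lt_or_eq_of_le (Finset.sum_nonneg (fun j _ => Complex.normSq_nonneg (V j)) : 0 ≤ P)
      with h | h
    · exact h
    · exfalso
      have hall : ∀ j ∈ s, V j = 0 := by
        intro j hj
        have := (Finset.sum_eq_zero_iff_of_nonneg
          (fun j _ => Complex.normSq_nonneg (V j))).mp h.symm j hj
        exact Complex.normSq_eq_zero.mp this
      have hvl : V l = 0 := by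
        have : (∑ j ∈ s, V j * conj (Z j)) = 0 :=
          Finset.sum_eq_zero fun j hj => by rw [hall j hj, zero_mul]
        rw [horth'] at this
        rcases mul_eq_zero.mp this with h' | h'
        · exact h'
        · exact absurd (by simpa using h') hzl
      apply hV
      funext j
      by_cases hj : (j : ℕ) < n - 1
      · exact hall j (Finset.mem_filter.mpr ⟨Finset.mem_univ _, hj⟩)
      · have := j.isLt
        have : j = l := Fin.ext (show (j : ℕ) = n - 1 by omega)
        rw [this]; exact hvl
  have hlt : Complex.normSq (V l) < P := by
    have hz : 0 < Complex.normSq (Z l) := Complex.normSq_pos.mpr hzl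
    nlinarith
  have : (herm n V V).re = P - Complex.normSq (V l) := by
    rw [hVsplit, hsumV]
    simp [Complex.mul_conj]
    rfl
  linarith

end KahlerAux


/-- positivity of the Hermitian form of the Kähler metric
`g = ∂∂̄ f(−r²)` on the time-like domain. -/
theorem kahler_metric_pos_def (n : ℕ) (hn : 2 ≤ n) (f f' f'' : ℝ → ℝ)
    (hf' : ∀ t < (0:ℝ), HasDerivAt f (f' t) t)
    (hf'' : ∀ t < (0:ℝ), HasDerivAt f' (f'' t) t)
    (hcont : ContinuousOn f'' (Set.Iio 0))
    (hpos : ∀ t < (0:ℝ), 0 < f' t)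
    (hneg : ∀ t < (0:ℝ), f' t + t * f'' t < 0)
    (Z : Fin n → ℂ) (hZ : (herm n Z Z).re < 0)
    (W : Fin n → ℂ) (hW : W ≠ 0) :
    0 < f' ((herm n Z Z).re) * (herm n W W).re
        + f'' ((herm n Z Z).re) * ‖herm n W Z‖ ^ 2 := by
  classical
  open KahlerAux in
  set t : ℝ := (herm n Z Z).re with ht
  have hZZ : herm n Z Z = (t : ℂ) := KahlerAux.herm_self_re Z
  have hZZ0 : herm n Z Z ≠ 0 := by
    rw [hZZ]
    exact_mod_cast ne_of_lt hZ
  set lam : ℂ := herm n W Z / herm n Z Z with hlam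
  set V : Fin n → ℂ := W - lam • Z with hV
  have horth : herm n V Z = 0 := by
    rw [hV, KahlerAux.herm_sub_left, KahlerAux.herm_smul_left, hlam,
      div_mul_cancel₀ _ hZZ0, sub_self]
  have hWZ : herm n W Z = lam * herm n Z Z := by
    rw [hlam, div_mul_cancel₀ _ hZZ0]
  have hWdecomp : W = V + lam • Z := by rw [hV]; abel
  have hWW : herm n W W = herm n V V + (Complex.normSq lam : ℝ) * (t : ℂ) := by
    rw [hWdecomp, KahlerAux.herm_add_left, KahlerAux.herm_add_right,
      KahlerAux.herm_add_right, KahlerAux.herm_smul_left, KahlerAux.herm_smul_right,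
      KahlerAux.herm_smul_left, KahlerAux.herm_smul_right, horth]
    have hZV : herm n Z V = 0 := by rw [← KahlerAux.herm_conj, horth, map_zero]
    rw [hZV, hZZ]
    push_cast
    rw [← Complex.mul_conj]
    ring
  set p : ℝ := (herm n V V).re with hp
  set m : ℝ := Complex.normSq lam with hm
  have hq : (herm n W W).re = p + m * t := by
    rw [hWW]
    simp [hp, hm]
  have hs : ‖herm n W Z‖ ^ 2 = m * t^2 := by
    rw [hWZ, hZZ, Complex.sq_norm, Complex.normSq_mul, Complex.normSq_ofReal, ← hm]
    ring
  have hm0 : 0 ≤ m := Complex.normSq_nonneg _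
  set a : ℝ := f' t with ha
  set b : ℝ := f'' t with hb
  have hapos : 0 < a := hpos t hZ
  have habneg : a + t * b < 0 := hneg t hZ
  rw [hq, hs]
  by_cases hlam0 : lam = 0
  · have hVW : V = W := by rw [hV, hlam0]; simp
    have hppos : 0 < p := KahlerAux.spacelike (by omega) Z V hZ horth (hVW ▸ hW)
    have : m = 0 := by rw [hm, hlam0]; simp
    rw [this]
    nlinarith
  · have hmpos : 0 < m := Complex.normSq_pos.mpr hlam0
    have hpnn : 0 ≤ p := by
      by_cases hV0 : V = 0
      · rw [hp, hV0]
        simp [herm]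
      · exact le_of_lt (KahlerAux.spacelike (by omega) Z V hZ horth hV0)
    have expand : a * (p + m * t) + b * (m * t ^ 2) = a * p + m * (t * (a + t * b)) := by
      ring
    have h1 : 0 < m * (t * (a + t * b)) :=
      mul_pos hmpos (mul_pos_of_neg_of_neg hZ habneg)
    have h2 : 0 ≤ a * p := mul_nonneg hapos.le hpnn
    linarith
end

section
/- Let a < 0 and r₀ > 0, and define f(t) = (2/a)·ln(−t − r₀²) for t < −r₀². Then for every t < −r₀² one has f′(t) > 0 and f′(t) + t·f″(t) < 0. Consequently the potential f of the time-like distance satisfies the hypotheses under which ∂∂̄ f(−r²) is a positive definite Kähler metric. -/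
/-- for `a < 0`, `r₀ > 0` and `f(t) = (2/a)·ln(−t − r₀²)` on
`t < −r₀²`, one has `f′(t) > 0` and `f′(t) + t·f″(t) < 0` there. -/
theorem log_potential_conditions (a r₀ : ℝ) (ha : a < 0) (hr₀ : 0 < r₀)
    (f : ℝ → ℝ)
    (hf : ∀ t < -(r₀ ^ 2), f t = (2 / a) * Real.log (-t - r₀ ^ 2)) :
    ∀ t < -(r₀ ^ 2),
      0 < deriv f t ∧ deriv f t + t * deriv (deriv f) t < 0 := by
  have hU : IsOpen (Set.Iio (-(r₀ ^ 2))) := isOpen_Iio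
  have hu : ∀ s : ℝ, s < -(r₀ ^ 2) → 0 < -s - r₀ ^ 2 := fun s hs => by linarith
  have ha' : a ≠ 0 := ne_of_lt ha
  -- first derivative on the open set
  have hderiv1 : ∀ s ∈ Set.Iio (-(r₀ ^ 2)),
      deriv f s = (2 / a) * (-(-s - r₀ ^ 2)⁻¹) := by
    intro s hs
    have hne : -s - r₀ ^ 2 ≠ 0 := ne_of_gt (hu s hs)
    have h1 : HasDerivAt (fun x : ℝ => -x - r₀ ^ 2) (-1) s := by
      simpa using ((hasDerivAt_id s).neg.sub_const (r₀ ^ 2))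
    have h2 : HasDerivAt (fun x : ℝ => (2 / a) * Real.log (-x - r₀ ^ 2))
        ((2 / a) * ((-1) / (-s - r₀ ^ 2))) s := (h1.log hne).const_mul _
    have heq : f =ᶠ[nhds s] fun x : ℝ => (2 / a) * Real.log (-x - r₀ ^ 2) :=
      Filter.eventuallyEq_of_mem (hU.mem_nhds hs) (fun x hx => hf x hx)
    rw [heq.deriv_eq, h2.deriv]
    field_simp
  intro t ht
  have htU : t ∈ Set.Iio (-(r₀ ^ 2)) := ht
  have hne : -t - r₀ ^ 2 ≠ 0 := ne_of_gt (hu t ht)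
  -- second derivative at t
  have hderiv2 : deriv (deriv f) t = (2 / a) * (-((-t - r₀ ^ 2) ^ 2)⁻¹) := by
    have heq : deriv f =ᶠ[nhds t] fun x : ℝ => (2 / a) * (-(-x - r₀ ^ 2)⁻¹) :=
      Filter.eventuallyEq_of_mem (hU.mem_nhds htU) hderiv1
    have h1 : HasDerivAt (fun x : ℝ => -x - r₀ ^ 2) (-1) t := by
      simpa using ((hasDerivAt_id t).neg.sub_const (r₀ ^ 2))
    have h2 : HasDerivAt (fun x : ℝ => (2 / a) * (-(-x - r₀ ^ 2)⁻¹))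
        ((2 / a) * (-(-(-1) / (-t - r₀ ^ 2) ^ 2))) t :=
      ((h1.inv hne).neg).const_mul _
    rw [heq.deriv_eq, h2.deriv]
    field_simp
  have hu' : 0 < -t - r₀ ^ 2 := hu t ht
  have hd1 : deriv f t = (2 / a) * (-(-t - r₀ ^ 2)⁻¹) := hderiv1 t htU
  constructor
  · rw [hd1]
    have h2a : 2 / a < 0 := div_neg_of_pos_of_neg (by norm_num) ha
    have : -(-t - r₀ ^ 2)⁻¹ < 0 := neg_neg_iff_pos.mpr (inv_pos.mpr hu')
    exact mul_pos_of_neg_of_neg h2a this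
  · rw [hd1, hderiv2]
    have key : (2 / a) * (-(-t - r₀ ^ 2)⁻¹) + t * ((2 / a) * (-((-t - r₀ ^ 2) ^ 2)⁻¹))
        = 2 * r₀ ^ 2 / (a * (-t - r₀ ^ 2) ^ 2) := by
      field_simp
      ring
    rw [key]
    apply div_neg_of_pos_of_neg
    · positivity
    · have : 0 < (-t - r₀ ^ 2) ^ 2 := by positivity
      exact mul_neg_of_neg_of_pos ha this
end

section
/- Let n ≥ 2, a < 0, r₀ > 0, and define F(Z) = (2/a)·ln(−h(Z,Z) − r₀²) on the domain {Z ∈ ℂⁿ : h(Z,Z) < −r₀²}. Then F is twice differentiable there, and for every such Z, writing r² = −h(Z,Z), and for every W ∈ ℂⁿ: D²F(Z)(W,W) + D²F(Z)(iW,iW) = −(8/(a(r² − r₀²)))·( h(W,W) + |h(Z,W)|²/(r² − r₀²) ). Thus the Kähler metric g = −(4/(a(r²−r₀²)))·( h′ + (r²/(r²−r₀²))(η′⊗η′+η̃′⊗η̃′) ) has global potential (2/a)·ln(r² − r₀²). -/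
open scoped ComplexConjugate BigOperators

namespace SF
variable (n : ℕ)

noncomputable def bb (Z W : Fin n → ℂ) : ℝ := (herm n Z W).re

lemma herm_add_left (Z Z' W : Fin n → ℂ) : herm n (Z + Z') W = herm n Z W + herm n Z' W := by
  simp only [herm, Pi.add_apply]
  rw [← Finset.sum_add_distrib]
  exact Finset.sum_congr rfl fun j _ => by ring

lemma herm_smul_left (c : ℝ) (Z W : Fin n → ℂ) : herm n (c • Z) W = (c : ℂ) * herm n Z W := by
  simp only [herm, Pi.smul_apply, Complex.real_smul, Finset.mul_sum]
  exact Finset.sum_congr rfl fun j _ => by ring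

lemma herm_conj (Z W : Fin n → ℂ) : herm n W Z = conj (herm n Z W) := by
  simp only [herm, map_sum, map_mul, Complex.conj_conj]
  refine Finset.sum_congr rfl fun j _ => ?_
  split_ifs <;> simp <;> ring

lemma herm_smul_I_right (Z W : Fin n → ℂ) :
    herm n Z (Complex.I • W) = -Complex.I * herm n Z W := by
  simp only [herm, Pi.smul_apply, smul_eq_mul, map_mul, Complex.conj_I, Finset.mul_sum]
  exact Finset.sum_congr rfl fun j _ => by ring

-- bb lemmas
lemma bb_symm (Z W : Fin n → ℂ) : bb n Z W = bb n W Z := by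
  unfold bb; rw [herm_conj]; simp

lemma bb_add_left (Z Z' W : Fin n → ℂ) : bb n (Z + Z') W = bb n Z W + bb n Z' W := by
  unfold bb; rw [herm_add_left]; simp

lemma bb_smul_left (c : ℝ) (Z W : Fin n → ℂ) : bb n (c • Z) W = c * bb n Z W := by
  unfold bb; rw [herm_smul_left]; simp [Complex.re_ofReal_mul]

lemma bb_add_right (Z W W' : Fin n → ℂ) : bb n Z (W + W') = bb n Z W + bb n Z W' := by
  rw [bb_symm, bb_add_left, bb_symm n W Z, bb_symm n W' Z]

lemma bb_smul_right (c : ℝ) (Z W : Fin n → ℂ) : bb n Z (c • W) = c * bb n Z W := by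
  rw [bb_symm, bb_smul_left, bb_symm]

lemma herm_I_I (V W : Fin n → ℂ) :
    herm n (Complex.I • V) (Complex.I • W) = herm n V W := by
  simp only [herm, Pi.smul_apply, smul_eq_mul, map_mul, Complex.conj_I]
  refine Finset.sum_congr rfl fun j _ => ?_
  linear_combination (-(if (j:ℕ) < n - 1 then (1:ℂ) else -1) * V j * conj (W j)) * Complex.I_sq

lemma bb_I_I (V W : Fin n → ℂ) : bb n (Complex.I • V) (Complex.I • W) = bb n V W := by
  unfold bb; rw [herm_I_I]

lemma bb_right_I (Z W : Fin n → ℂ) : bb n Z (Complex.I • W) = (herm n Z W).im := by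
  unfold bb; rw [herm_smul_I_right]; simp

-- the CLM in the second argument
noncomputable def bL (Z : Fin n → ℂ) : (Fin n → ℂ) →L[ℝ] ℝ :=
  LinearMap.toContinuousLinearMap
  { toFun := fun W => bb n Z W
    map_add' := fun W W' => bb_add_right n Z W W'
    map_smul' := fun c W => bb_smul_right n c Z W }

@[simp] lemma bL_apply (Z W : Fin n → ℂ) : bL n Z W = bb n Z W := rfl

noncomputable def bLL : (Fin n → ℂ) →L[ℝ] ((Fin n → ℂ) →L[ℝ] ℝ) :=
  LinearMap.toContinuousLinearMap
  { toFun := fun Z => bL n Z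
    map_add' := fun Z Z' => by
      ext W
      simp only [bL_apply, ContinuousLinearMap.add_apply]
      exact bb_add_left n Z Z' W
    map_smul' := fun c Z => by
      ext W
      simp only [bL_apply, RingHom.id_apply, ContinuousLinearMap.coe_smul', Pi.smul_apply,
        smul_eq_mul]
      exact bb_smul_left n c Z W }

@[simp] lemma bLL_apply (Z : Fin n → ℂ) : bLL n Z = bL n Z := rfl

-- quadratic bound
lemma bb_self_bound (V : Fin n → ℂ) : |bb n V V| ≤ n * ‖V‖ * ‖V‖ := by
  unfold bb herm
  rw [Complex.re_sum]
  calc |∑ j : Fin n, ((if (j:ℕ) < n-1 then (1:ℂ) else -1) * (V j * conj (V j))).re|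
      ≤ ∑ j : Fin n, |((if (j:ℕ) < n-1 then (1:ℂ) else -1) * (V j * conj (V j))).re| :=
        Finset.abs_sum_le_sum_abs _ _
    _ ≤ ∑ j : Fin n, ‖V‖ * ‖V‖ := by
        refine Finset.sum_le_sum fun j _ => ?_
        have h1 : ‖V j‖ ≤ ‖V‖ := norm_le_pi_norm V j
        have h0 : (0:ℝ) ≤ ‖V j‖ := norm_nonneg _
        have key : |((if (j:ℕ) < n-1 then (1:ℂ) else -1) * (V j * conj (V j))).re|
            = Complex.normSq (V j) := by
          split_ifs <;>
            simp [Complex.mul_conj, abs_of_nonneg (Complex.normSq_nonneg _)]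
        rw [key]
        have : Complex.normSq (V j) = ‖V j‖ * ‖V j‖ := by
          rw [Complex.normSq_eq_norm_sq, sq]
        rw [this]
        exact mul_le_mul h1 h1 h0 (norm_nonneg _)
    _ = n * ‖V‖ * ‖V‖ := by simp [mul_assoc]

lemma hasFDerivAt_q (Z : Fin n → ℂ) :
    HasFDerivAt (fun Z => bb n Z Z) ((2:ℝ) • bL n Z) Z := by
  rw [hasFDerivAt_iff_isLittleO_nhds_zero]
  have key : ∀ V : Fin n → ℂ,
      bb n (Z + V) (Z + V) - bb n Z Z - ((2:ℝ) • bL n Z) V = bb n V V := by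
    intro V
    simp only [ContinuousLinearMap.coe_smul', Pi.smul_apply, bL_apply, smul_eq_mul]
    rw [bb_add_left, bb_add_right, bb_add_right, bb_symm n V Z]
    ring
  refine (Asymptotics.isLittleO_iff).2 fun ε hε => ?_
  have : ∀ᶠ V : (Fin n → ℂ) in nhds 0, ‖V‖ < ε / (n + 1) := by
    have := Metric.ball_mem_nhds (0 : Fin n → ℂ) (by positivity : (0:ℝ) < ε / (n+1))
    filter_upwards [this] with V hV
    simpa [dist_eq_norm] using hV
  filter_upwards [this] with V hV
  rw [key]
  have h1 : |bb n V V| ≤ n * ‖V‖ * ‖V‖ := bb_self_bound n V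
  have h2 : (n:ℝ) * ‖V‖ ≤ ε := by
    calc (n:ℝ) * ‖V‖ ≤ (n+1) * (ε / (n+1)) := by
          apply mul_le_mul (by linarith) hV.le (norm_nonneg _) (by positivity)
      _ = ε := by field_simp
  calc ‖bb n V V‖ = |bb n V V| := rfl
    _ ≤ n * ‖V‖ * ‖V‖ := h1
    _ ≤ ε * ‖V‖ := by
        apply mul_le_mul_of_nonneg_right h2 (norm_nonneg _)


variable (a r₀ : ℝ)

noncomputable def gf (Z : Fin n → ℂ) : ℝ := -(bb n Z Z) - r₀ ^ 2

lemma hasFDerivAt_gf (Z : Fin n → ℂ) :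
    HasFDerivAt (gf n r₀) ((-2:ℝ) • bL n Z) Z := by
  have h := ((hasFDerivAt_q n Z).neg).sub_const (r₀ ^ 2)
  rw [← neg_smul] at h
  exact h

noncomputable def D1 (Z : Fin n → ℂ) : (Fin n → ℂ) →L[ℝ] ℝ :=
  ((-4 / a) * (gf n r₀ Z)⁻¹) • bL n Z

lemma hasFDerivAt_G (Z : Fin n → ℂ) (hZ : 0 < gf n r₀ Z) :
    HasFDerivAt (fun Z => (2 / a) * Real.log (gf n r₀ Z)) (D1 n a r₀ Z) Z := by
  have h1 := ((hasFDerivAt_gf n r₀ Z).log hZ.ne').const_mul (2 / a)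
  refine h1.congr_fderiv ?_
  ext W
  simp only [D1, ContinuousLinearMap.coe_smul', Pi.smul_apply, bL_apply, smul_eq_mul]
  ring

noncomputable def D2 (Z : Fin n → ℂ) : (Fin n → ℂ) →L[ℝ] ((Fin n → ℂ) →L[ℝ] ℝ) :=
  ((-4 / a) * (gf n r₀ Z)⁻¹) • bLL n
    + ((-4 / a) • (-((gf n r₀ Z) ^ 2)⁻¹ • ((-2:ℝ) • bL n Z))).smulRight (bL n Z)

lemma hasFDerivAt_D1 (Z : Fin n → ℂ) (hZ : 0 < gf n r₀ Z) :
    HasFDerivAt (D1 n a r₀) (D2 n a r₀ Z) Z := by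
  have hc : HasFDerivAt (fun Z => (-4 / a) * (gf n r₀ Z)⁻¹)
      ((-4 / a) • (-((gf n r₀ Z) ^ 2)⁻¹ • ((-2:ℝ) • bL n Z))) Z :=
    ((hasDerivAt_inv hZ.ne').comp_hasFDerivAt Z (hasFDerivAt_gf n r₀ Z)).const_mul (-4 / a)
  have hb : HasFDerivAt (fun Z => bL n Z) (bLL n) Z := (bLL n).hasFDerivAt
  have h := hc.smul hb
  exact h

end SF

/-- for `F(Z) = (2/a)·ln(−h(Z,Z) − r₀²)` on `{h(Z,Z) < −r₀²}`,
`F` is twice differentiable and, writing `r² = −h(Z,Z)`,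
`D²F(Z)(W,W) + D²F(Z)(iW,iW) = −(8/(a(r²−r₀²)))·( h(W,W) + |h(Z,W)|²/(r²−r₀²) )`. -/
theorem potential_of_space_form_metric (n : ℕ) (hn : 2 ≤ n) (a r₀ : ℝ)
    (ha : a < 0) (hr₀ : 0 < r₀)
    (F : (Fin n → ℂ) → ℝ)
    (hF : ∀ Z : Fin n → ℂ, (herm n Z Z).re < -(r₀ ^ 2) →
      F Z = (2 / a) * Real.log (-(herm n Z Z).re - r₀ ^ 2)) :
    ∀ Z : Fin n → ℂ, (herm n Z Z).re < -(r₀ ^ 2) →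
      (DifferentiableAt ℝ F Z ∧ DifferentiableAt ℝ (fderiv ℝ F) Z) ∧
      ∀ W : Fin n → ℂ,
        fderiv ℝ (fderiv ℝ F) Z W W
          + fderiv ℝ (fderiv ℝ F) Z (Complex.I • W) (Complex.I • W)
        = -(8 / (a * (-(herm n Z Z).re - r₀ ^ 2)))
            * ((herm n W W).re
              + ‖herm n Z W‖ ^ 2 / (-(herm n Z Z).re - r₀ ^ 2)) := by
  intro Z hZ
  have ha' : a ≠ 0 := ha.ne
  -- the open set
  have hqcont : Continuous (fun Z => SF.bb n Z Z) :=
    continuous_iff_continuousAt.2 fun Z =>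
      (SF.hasFDerivAt_q n Z).differentiableAt.continuousAt
  have hU : IsOpen {Z : Fin n → ℂ | SF.bb n Z Z < -(r₀ ^ 2)} :=
    isOpen_lt hqcont continuous_const
  have hZU : Z ∈ {Z : Fin n → ℂ | SF.bb n Z Z < -(r₀ ^ 2)} := hZ
  have hmem : {Z : Fin n → ℂ | SF.bb n Z Z < -(r₀ ^ 2)} ∈ nhds Z := hU.mem_nhds hZU
  have hgpos : ∀ Z' ∈ {Z : Fin n → ℂ | SF.bb n Z Z < -(r₀ ^ 2)}, 0 < SF.gf n r₀ Z' := by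
    intro Z' hZ'
    simp only [Set.mem_setOf_eq] at hZ'
    unfold SF.gf; linarith
  -- F agrees with G near each point of U
  have hFG : ∀ Z' ∈ {Z : Fin n → ℂ | SF.bb n Z Z < -(r₀ ^ 2)},
      F =ᶠ[nhds Z'] (fun Z => (2 / a) * Real.log (SF.gf n r₀ Z)) := by
    intro Z' hZ'
    filter_upwards [hU.mem_nhds hZ'] with Y hY
    exact hF Y hY
  -- first derivative of F on U
  have hfd : ∀ Z' ∈ {Z : Fin n → ℂ | SF.bb n Z Z < -(r₀ ^ 2)},
      fderiv ℝ F Z' = SF.D1 n a r₀ Z' := by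
    intro Z' hZ'
    rw [(hFG Z' hZ').fderiv_eq, (SF.hasFDerivAt_G n a r₀ Z' (hgpos Z' hZ')).fderiv]
  have hdF : DifferentiableAt ℝ F Z :=
    (hFG Z hZU).differentiableAt_iff.2 (SF.hasFDerivAt_G n a r₀ Z (hgpos Z hZU)).differentiableAt
  -- fderiv F agrees with D1 near Z
  have heq2 : fderiv ℝ F =ᶠ[nhds Z] SF.D1 n a r₀ := by
    filter_upwards [hmem] with Y hY
    exact hfd Y hY
  have hdD1 := SF.hasFDerivAt_D1 n a r₀ Z (hgpos Z hZU)
  have hdF2 : DifferentiableAt ℝ (fderiv ℝ F) Z :=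
    heq2.differentiableAt_iff.2 hdD1.differentiableAt
  have h2 : fderiv ℝ (fderiv ℝ F) Z = SF.D2 n a r₀ Z := by
    rw [heq2.fderiv_eq, hdD1.fderiv]
  refine ⟨⟨hdF, hdF2⟩, ?_⟩
  intro W
  rw [h2]
  have hgf : -(herm n Z Z).re - r₀ ^ 2 = SF.gf n r₀ Z := rfl
  have hgne : SF.gf n r₀ Z ≠ 0 := (hgpos Z hZU).ne'
  simp only [SF.D2, ContinuousLinearMap.add_apply, ContinuousLinearMap.coe_smul',
    Pi.smul_apply, ContinuousLinearMap.smulRight_apply, SF.bLL_apply, SF.bL_apply,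
    smul_eq_mul, ContinuousLinearMap.neg_apply]
  rw [SF.bb_I_I, SF.bb_right_I, hgf]
  have habs : ‖herm n Z W‖ ^ 2
      = (herm n Z W).re * (herm n Z W).re + (herm n Z W).im * (herm n Z W).im := by
    rw [Complex.sq_norm, Complex.normSq_apply]
  have hre : (herm n W W).re = SF.bb n W W := rfl
  have hre2 : (herm n Z W).re = SF.bb n Z W := rfl
  rw [habs, hre, hre2]
  field_simp
  ring
end

section
/- Let n ≥ 2, let Z ∈ ℂⁿ satisfy h(Z,Z) < −1, and write r² = −h(Z,Z) (so r > 1). Then for every W ∈ ℂⁿ with W ≠ 0: (4/(r² − 1))·h(W,W) + (4/(r² − 1)²)·|h(W,Z)|² > 0. That is, the metric g = −2∂∂̄ ln(r² − 1) of constant holomorphic sectional curvature −1 is positive definite on the hyperbolic unit disc 𝔻 = {Z ∈ ℂⁿ : h(Z,Z) < −1}. -/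
open scoped ComplexConjugate BigOperators

lemma herm_split (n : ℕ) (hn : 2 ≤ n) (Z W : Fin n → ℂ) :
    herm n Z W = (∑ j ∈ Finset.univ.filter (fun j : Fin n => (j : ℕ) < n - 1),
        Z j * conj (W j)) - Z ⟨n - 1, by omega⟩ * conj (W ⟨n - 1, by omega⟩) := by
  classical
  have hfilt : Finset.univ.filter (fun j : Fin n => ¬ (j : ℕ) < n - 1)
      = {(⟨n - 1, by omega⟩ : Fin n)} := by
    ext j
    simp only [Finset.mem_filter, Finset.mem_univ, true_and, Finset.mem_singleton,
      Fin.ext_iff, Fin.val_mk]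
    have := j.isLt
    omega
  have := (Finset.sum_filter_add_sum_filter_not (Finset.univ : Finset (Fin n))
    (fun j : Fin n => (j : ℕ) < n - 1)
    (fun j => (if (j : ℕ) < n - 1 then (1 : ℂ) else -1) * (Z j * conj (W j)))).symm
  rw [herm, this, hfilt]
  rw [Finset.sum_congr rfl (fun j hj => by
    rw [if_pos (Finset.mem_filter.mp hj).2, one_mul])]
  simp [sub_eq_add_neg]

set_option maxHeartbeats 800000 in
/-- positive definiteness on the hyperbolic unit "disc"
`h(Z,Z) < −1` of the Hermitian form of the metric `g = −2∂∂̄ ln(r²−1)`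
of constant holomorphic sectional curvature −1; here `r² = −h(Z,Z)`. -/
theorem disc_metric_pos_def (n : ℕ) (hn : 2 ≤ n)
    (Z : Fin n → ℂ) (hZ : (herm n Z Z).re < -1)
    (W : Fin n → ℂ) (hW : W ≠ 0) :
    0 < 4 / (-(herm n Z Z).re - 1) * (herm n W W).re
        + 4 / (-(herm n Z Z).re - 1) ^ 2 * ‖herm n W Z‖ ^ 2 := by
  classical
  set L : Fin n := ⟨n - 1, by omega⟩ with hL
  set s : Finset (Fin n) := Finset.univ.filter (fun j : Fin n => (j : ℕ) < n - 1) with hs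
  set A : ℝ := ∑ j ∈ s, Complex.normSq (Z j) with hA
  set B : ℝ := Complex.normSq (Z L) with hB
  set P : ℝ := ∑ j ∈ s, Complex.normSq (W j) with hP
  set Q : ℝ := Complex.normSq (W L) with hQ
  set S : ℂ := ∑ j ∈ s, W j * conj (Z j) with hSdef
  have hA0 : 0 ≤ A := Finset.sum_nonneg fun j _ => Complex.normSq_nonneg _
  have hP0 : 0 ≤ P := Finset.sum_nonneg fun j _ => Complex.normSq_nonneg _
  have hB0 : 0 ≤ B := Complex.normSq_nonneg _
  have hQ0 : 0 ≤ Q := Complex.normSq_nonneg _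
  -- real parts
  have hZre : (herm n Z Z).re = A - B := by
    rw [herm_split n hn Z Z]
    simp only [Complex.sub_re, Complex.mul_conj]
    rw [← Complex.ofReal_sum _ (fun j => Complex.normSq (Z j))]
    simp [hA, hB]; rfl
  have hWre : (herm n W W).re = P - Q := by
    rw [herm_split n hn W W]
    simp only [Complex.sub_re, Complex.mul_conj]
    rw [← Complex.ofReal_sum _ (fun j => Complex.normSq (W j))]
    simp [hP, hQ]; rfl
  have hT : herm n W Z = S - W L * conj (Z L) := herm_split n hn W Z
  have hσ : 1 < B - A := by rw [hZre] at hZ; linarith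
  have hB1 : 1 < B := by linarith
  -- Cauchy–Schwarz : |S|^2 ≤ P * A
  have hCS : ‖S‖ ^ 2 ≤ P * A := by
    have h1 : ‖S‖ ≤ ∑ j ∈ s, ‖W j‖ * ‖Z j‖ := by
      calc ‖S‖ ≤ ∑ j ∈ s, ‖W j * conj (Z j)‖ :=
            norm_sum_le _ _
        _ = ∑ j ∈ s, ‖W j‖ * ‖Z j‖ :=
            Finset.sum_congr rfl fun j _ => by rw [norm_mul, Complex.norm_conj]
    have h2 : (∑ j ∈ s, ‖W j‖ * ‖Z j‖) ^ 2
        ≤ (∑ j ∈ s, ‖W j‖ ^ 2) * ∑ j ∈ s, ‖Z j‖ ^ 2 :=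
      Finset.sum_mul_sq_le_sq_mul_sq s _ _
    have h3 : (∑ j ∈ s, ‖W j‖ ^ 2) = P :=
      Finset.sum_congr rfl fun j _ => Complex.sq_norm _
    have h4 : (∑ j ∈ s, ‖Z j‖ ^ 2) = A :=
      Finset.sum_congr rfl fun j _ => Complex.sq_norm _
    calc ‖S‖ ^ 2
        ≤ (∑ j ∈ s, ‖W j‖ * ‖Z j‖) ^ 2 :=
          pow_le_pow_left₀ (norm_nonneg _) h1 2
      _ ≤ _ := h2
      _ = P * A := by rw [h3, h4]
  -- W ≠ 0 gives P + Q > 0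
  have hPQ : 0 < P + Q := by
    have : ∃ j, W j ≠ 0 := by
      by_contra h
      push_neg at h
      exact hW (funext h)
    obtain ⟨j, hj⟩ := this
    have hj' : 0 < Complex.normSq (W j) := Complex.normSq_pos.mpr hj
    by_cases hjc : (j : ℕ) < n - 1
    · have : Complex.normSq (W j) ≤ P := by
        refine Finset.single_le_sum (fun i _ => Complex.normSq_nonneg _) ?_
        simp [hs, hjc]
      linarith
    · have hjn : (j : ℕ) < n := j.isLt
      have hjL : j = L := by
        rw [hL]; apply Fin.ext; simp only [Fin.val_mk]; omega
      rw [hjL] at hj'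
      linarith
  -- the key inequality
  have key : 0 < (B - A - 1) * (P - Q) + ‖herm n W Z‖ ^ 2 := by
    rcases lt_or_ge Q P with hc | hc
    · nlinarith [sq_nonneg (‖herm n W Z‖)]
    · -- Q ≥ P, so Q > 0
      have hQpos : 0 < Q := by linarith
      set u : ℝ := Real.sqrt (Q * B) with hu
      set v : ℝ := Real.sqrt (P * A) with hv
      have hu0 : 0 ≤ u := Real.sqrt_nonneg _
      have hv0 : 0 ≤ v := Real.sqrt_nonneg _
      have hu2 : u ^ 2 = Q * B := Real.sq_sqrt (by positivity)
      have hv2 : v ^ 2 = P * A := Real.sq_sqrt (by positivity)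
      have hvu : v ≤ u := by
        apply Real.sqrt_le_sqrt
        nlinarith
      have habs_u : ‖W L * conj (Z L)‖ = u := by
        rw [hu, Complex.norm_def, Complex.normSq_mul, Complex.normSq_conj, hQ, hB]
      have hSv : ‖S‖ ≤ v := by
        have h := Real.sqrt_le_sqrt hCS
        rwa [Real.sqrt_sq (norm_nonneg _)] at h
      have hTlb : u - v ≤ ‖herm n W Z‖ := by
        rw [hT]
        calc u - v ≤ ‖W L * conj (Z L)‖ - ‖S‖ := by
              rw [habs_u]; linarith
          _ ≤ ‖W L * conj (Z L) - S‖ := norm_sub_norm_le _ _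
          _ = ‖S - W L * conj (Z L)‖ := norm_sub_rev _ _
      have hT2 : (u - v) ^ 2 ≤ ‖herm n W Z‖ ^ 2 :=
        pow_le_pow_left₀ (by linarith) hTlb 2
      have hexp : (u - v) ^ 2 = Q * B + P * A - 2 * (u * v) := by
        rw [sub_sq, hu2, hv2]; ring
      rcases eq_or_lt_of_le hP0 with hPz | hPpos
      · -- P = 0
        have hvz : v = 0 := by rw [hv, ← hPz, zero_mul, Real.sqrt_zero]
        have h8 : Q * B ≤ ‖herm n W Z‖ ^ 2 := by
          calc Q * B = u ^ 2 := hu2.symm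
            _ = (u - v) ^ 2 := by rw [hvz]; ring
            _ ≤ _ := hT2
        have hid : (B - A - 1) * (P - Q) + Q * B = Q * (A + 1) := by
          rw [← hPz]; ring
        have hQA : 0 < Q * (A + 1) := mul_pos hQpos (by linarith)
        linarith
      · -- P > 0
        have h5 : 0 < P * (B - 1) + Q * (A + 1) := by
          have := mul_pos hPpos (show (0:ℝ) < B - 1 by linarith)
          have := mul_pos hQpos (show (0:ℝ) < A + 1 by linarith)
          linarith
        have h6 : (2 * (u * v)) ^ 2 < (P * (B - 1) + Q * (A + 1)) ^ 2 := by
          have huv : (u * v) ^ 2 = Q * B * (P * A) := by rw [mul_pow, hu2, hv2]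
          have hPQσ : 0 < P * Q * (B - A - 1) :=
            mul_pos (mul_pos hPpos hQpos) (by linarith)
          nlinarith [sq_nonneg (P * (B - 1) - Q * (A + 1))]
        have h7 : 2 * (u * v) < P * (B - 1) + Q * (A + 1) :=
          lt_of_pow_lt_pow_left₀ 2 h5.le h6
        have hid2 : (B - A - 1) * (P - Q) + (Q * B + P * A - 2 * (u * v))
            = P * (B - 1) + Q * (A + 1) - 2 * (u * v) := by ring
        linarith [hT2, hexp.le, hexp.ge]
  -- conclude
  have hd : 0 < -(herm n Z Z).re - 1 := by rw [hZre]; linarith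
  have hdne : B - A - 1 ≠ 0 := by linarith
  have hgoal : 4 / (-(herm n Z Z).re - 1) * (herm n W W).re
      + 4 / (-(herm n Z Z).re - 1) ^ 2 * ‖herm n W Z‖ ^ 2
      = 4 / (-(herm n Z Z).re - 1) ^ 2
        * ((B - A - 1) * (P - Q) + ‖herm n W Z‖ ^ 2) := by
    rw [hWre, hZre]
    have h9 : -(A - B) - 1 = B - A - 1 := by ring
    rw [h9]
    field_simp
  rw [hgoal]
  exact mul_pos (by positivity) key
end

section
/- Let I be an open interval and t : I → ℝ twice continuously differentiable with t(s) > 0 and t′(s) > 0 for all s ∈ I. Then the following are equivalent: (i) the function s ↦ t″(s)/(t(s)·t′(s)) + 4(1 − t′(s))/t(s)² is constant on I; (ii) there exist real constants c₁, c₂ such that t′(s) = c₁·t(s)⁴ + c₂·t(s)² + 1 for all s ∈ I (equivalently, the inverse function satisfies s(t) = ∫ dt/(c₁t⁴ + c₂t² + 1)). This is the analytic content of the statement that the Kähler metric of a rotational hypersurface of type I is Bochner-Kähler exactly for these meridians. -/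
/-- for a meridian radius function `t(s) > 0` with `t′(s) > 0`
(rotational hypersurface of type I), the Bochner-flatness condition
"`t″/(t·t′) + 4(1−t′)/t²` is constant" holds iff
`t′ = c₁t⁴ + c₂t² + 1` for some constants `c₁, c₂`
(equivalently, `s(t) = ∫ dt/(c₁t⁴ + c₂t² + 1)`). -/
theorem bochner_meridian_type_I (I : Set ℝ) (hI : IsOpen I) (hIc : I.OrdConnected)
    (t t' t'' : ℝ → ℝ)
    (ht' : ∀ s ∈ I, HasDerivAt t (t' s) s)
    (ht'' : ∀ s ∈ I, HasDerivAt t' (t'' s) s)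
    (hcont : ContinuousOn t'' I)
    (hpos : ∀ s ∈ I, 0 < t s) (hmon : ∀ s ∈ I, 0 < t' s) :
    (∃ k : ℝ, ∀ s ∈ I, t'' s / (t s * t' s) + 4 * (1 - t' s) / (t s) ^ 2 = k) ↔
    (∃ c₁ c₂ : ℝ, ∀ s ∈ I, t' s = c₁ * t s ^ 4 + c₂ * t s ^ 2 + 1) := by
  constructor
  · rintro ⟨k, hk⟩
    rcases Set.eq_empty_or_nonempty I with hIe | ⟨s₀, hs₀⟩
    · exact ⟨0, 0, fun s hs => by simp [hIe] at hs⟩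
    -- the ODE: t'' = k * t * t' - 4*(1 - t')*t'/t
    have hode : ∀ s ∈ I, t'' s * t s = k * t s ^ 2 * t' s - 4 * (1 - t' s) * t' s := by
      intro s hs
      have h1 := hk s hs
      have hts := (hpos s hs).ne'
      have ht's := (hmon s hs).ne'
      field_simp at h1
      apply mul_right_cancel₀ hts
      linear_combination t s * h1
    -- h = (t' - 1 + (k/2) t²) / t⁴ has zero derivative on I
    set h : ℝ → ℝ := fun s => (t' s - 1 + (k / 2) * t s ^ 2) / t s ^ 4 with hh
    have hd : ∀ s ∈ I, HasDerivAt h 0 s := by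
      intro s hs
      have hts := (hpos s hs).ne'
      have hnum : HasDerivAt (fun s => t' s - 1 + (k / 2) * t s ^ 2)
          (t'' s + (k / 2) * (2 * t s * t' s)) s := by
        have := ((ht'' s hs).sub_const 1).add
          (((ht' s hs).pow 2).const_mul (k / 2))
        exact this.congr_deriv (by norm_num)
      have hden : HasDerivAt (fun s => t s ^ 4) (4 * t s ^ 3 * t' s) s := by
        have := (ht' s hs).pow 4
        exact this.congr_deriv (by norm_num)
      have := hnum.div hden (by positivity)
      refine this.congr_deriv (Eq.symm ?_)
      have hode' := hode s hs
      rw [eq_comm, div_eq_zero_iff]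
      left
      linear_combination t s ^ 3 * hode'
    have hconv : Convex ℝ I := convex_iff_ordConnected.mpr hIc
    have hdiff : DifferentiableOn ℝ h I :=
      fun s hs => ((hd s hs).differentiableAt).differentiableWithinAt
    have hfz : ∀ s ∈ I, fderivWithin ℝ h I s = 0 := by
      intro s hs
      rw [fderivWithin_of_isOpen hI hs, (hd s hs).hasFDerivAt.fderiv]
      ext; simp
    have hconst : ∀ s ∈ I, h s = h s₀ := fun s hs =>
      hconv.is_const_of_fderivWithin_eq_zero hdiff hfz hs hs₀
    refine ⟨h s₀, -(k / 2), fun s hs => ?_⟩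
    have hts := (hpos s hs).ne'
    rw [← hconst s hs, hh]
    field_simp
    ring
  · rintro ⟨c₁, c₂, hc⟩
    refine ⟨-2 * c₂, fun s hs => ?_⟩
    -- compute t'' s
    have hts := (hpos s hs).ne'
    have ht's := (hmon s hs).ne'
    have heq : t'' s = (4 * c₁ * t s ^ 3 + 2 * c₂ * t s) * t' s := by
      have h1 : HasDerivAt (fun u => c₁ * t u ^ 4 + c₂ * t u ^ 2 + 1)
          ((4 * c₁ * t s ^ 3 + 2 * c₂ * t s) * t' s) s := by
        have := ((((ht' s hs).pow 4).const_mul c₁).add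
          (((ht' s hs).pow 2).const_mul c₂)).add_const 1
        refine this.congr_deriv ?_
        norm_num; ring
      have h2 : HasDerivAt t' ((4 * c₁ * t s ^ 3 + 2 * c₂ * t s) * t' s) s := by
        apply h1.congr_of_eventuallyEq
        filter_upwards [hI.mem_nhds hs] with u hu
        exact hc u hu
      exact (ht'' s hs).unique h2
    have hne : c₁ * t s ^ 4 + c₂ * t s ^ 2 + 1 ≠ 0 := hc s hs ▸ ht's
    rw [heq, hc s hs]
    rw [mul_div_mul_right _ _ hne]
    field_simp
    ring
end

section
/- Let I be an open interval and t : I → ℝ twice continuously differentiable with t(s) > 0 and t′(s) ≥ 1 for all s ∈ I. Then the following are equivalent: (i) the function s ↦ t″(s)/(t(s)·t′(s)) + 4(1 − t′(s))/t(s)² is constant on I; (ii) there exist real constants c₁, c₂ such that t′(s) = c₁·t(s)⁴ + c₂·t(s)² + 1 for all s ∈ I (equivalently, the meridian satisfies s(t) = ∫ dt/(c₁t⁴ + c₂t² + 1)). This is the analytic content of the statement that the Kähler metric of a rotational hypersurface of type II is Bochner-Kähler exactly for these meridians. -/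
/-- If a function has zero derivative at every point of a convex set, it is constant there. -/
lemma aux_const_of_deriv_zero {I : Set ℝ} (hconv : Convex ℝ I) {g : ℝ → ℝ}
    (hg : ∀ s ∈ I, HasDerivAt g 0 s) {x y : ℝ} (hx : x ∈ I) (hy : y ∈ I) : g x = g y := by
  have := hconv.norm_image_sub_le_of_norm_hasDerivWithin_le
    (f := g) (f' := fun _ => 0) (C := 0)
    (fun s hs => (hg s hs).hasDerivWithinAt) (fun s _ => by simp) hx hy
  rw [zero_mul] at this
  have : ‖g y - g x‖ = 0 := le_antisymm this (norm_nonneg _)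
  have := norm_eq_zero.mp this
  linarith [sub_eq_zero.mp this]

/-- for a meridian radius function `t(s) > 0` with `t′(s) ≥ 1`
(rotational hypersurface of type II), the Bochner-flatness condition
"`t″/(t·t′) + 4(1−t′)/t²` is constant" holds iff
`t′ = c₁t⁴ + c₂t² + 1` for some constants `c₁, c₂`
(equivalently, `s(t) = ∫ dt/(c₁t⁴ + c₂t² + 1)`). -/
theorem bochner_meridian_type_II (I : Set ℝ) (hI : IsOpen I) (hIc : I.OrdConnected)
    (t t' t'' : ℝ → ℝ)
    (ht' : ∀ s ∈ I, HasDerivAt t (t' s) s)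
    (ht'' : ∀ s ∈ I, HasDerivAt t' (t'' s) s)
    (hcont : ContinuousOn t'' I)
    (hpos : ∀ s ∈ I, 0 < t s) (hmon : ∀ s ∈ I, 1 ≤ t' s) :
    (∃ k : ℝ, ∀ s ∈ I, t'' s / (t s * t' s) + 4 * (1 - t' s) / (t s) ^ 2 = k) ↔
    (∃ c₁ c₂ : ℝ, ∀ s ∈ I, t' s = c₁ * t s ^ 4 + c₂ * t s ^ 2 + 1) := by
  have hconv : Convex ℝ I := convex_iff_ordConnected.mpr hIc
  have htne : ∀ s ∈ I, t s ≠ 0 := fun s hs => (hpos s hs).ne'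
  have ht'pos : ∀ s ∈ I, (0:ℝ) < t' s := fun s hs => lt_of_lt_of_le one_pos (hmon s hs)
  have ht'ne : ∀ s ∈ I, t' s ≠ 0 := fun s hs => (ht'pos s hs).ne'
  constructor
  · rintro ⟨k, hk⟩
    rcases Set.eq_empty_or_nonempty I with hIe | ⟨s₀, hs₀⟩
    · exact ⟨0, 0, fun s hs => by rw [hIe] at hs; exact absurd hs (Set.notMem_empty s)⟩
    -- from the relation: t'' = k t t' + 4 t'(t'-1)/t on I
    have hode : ∀ s ∈ I, t'' s * t s = k * t s ^ 2 * t' s + 4 * t' s * (t' s - 1) := by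
      intro s hs
      have h := hk s hs
      have h1 : t s * t' s ≠ 0 := mul_ne_zero (htne s hs) (ht'ne s hs)
      rw [div_add_div _ _ h1 (pow_ne_zero 2 (htne s hs)),
        div_eq_iff (mul_ne_zero h1 (pow_ne_zero 2 (htne s hs)))] at h
      have goal' : t s * (t'' s * t s) = t s * (k * t s ^ 2 * t' s + 4 * t' s * (t' s - 1)) := by
        linear_combination h
      exact mul_left_cancel₀ (htne s hs) goal'
    set c₂ : ℝ := -k / 2 with hc₂
    set g : ℝ → ℝ := fun s => (t' s - 1 - c₂ * t s ^ 2) / t s ^ 4 with hg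
    have hgd : ∀ s ∈ I, HasDerivAt g 0 s := by
      intro s hs
      have hnum : HasDerivAt (fun s => t' s - 1 - c₂ * t s ^ 2)
          (t'' s - c₂ * (2 * t s * t' s)) s := by
        have h1 := (ht'' s hs).sub_const 1
        have h2 : HasDerivAt (fun s => c₂ * t s ^ 2) (c₂ * (2 * t s * t' s)) s := by
          have := ((ht' s hs).pow 2).const_mul c₂
          simpa [mul_comm, mul_assoc, mul_left_comm] using this
        exact h1.sub h2
      have hden : HasDerivAt (fun s => t s ^ 4) (4 * t s ^ 3 * t' s) s := by
        have := (ht' s hs).fun_pow 4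
        simpa [mul_comm, mul_assoc, mul_left_comm] using this
      have hq := hnum.div hden (pow_ne_zero 4 (htne s hs))
      refine (hq.congr_deriv ?_ : _)
      rw [div_eq_zero_iff]
      left
      have hd := hode s hs
      simp only [hc₂]
      linear_combination (t s ^ 3) * hd
    refine ⟨g s₀, c₂, fun s hs => ?_⟩
    have hgc : g s = g s₀ := aux_const_of_deriv_zero hconv hgd hs hs₀
    have h4 : t s ^ 4 ≠ 0 := pow_ne_zero 4 (htne s hs)
    have : (t' s - 1 - c₂ * t s ^ 2) = g s₀ * t s ^ 4 := by
      rw [← hgc, hg]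
      exact (div_mul_cancel₀ _ h4).symm
    linarith
  · rintro ⟨c₁, c₂, h⟩
    refine ⟨-2 * c₂, fun s hs => ?_⟩
    -- compute t'' from the eventual equality
    have heq : t' =ᶠ[nhds s] fun s => c₁ * t s ^ 4 + c₂ * t s ^ 2 + 1 := by
      filter_upwards [hI.mem_nhds hs] with x hx using h x hx
    have hD : HasDerivAt t' ((4 * c₁ * t s ^ 3 + 2 * c₂ * t s) * t' s) s := by
      have h4 : HasDerivAt (fun s => c₁ * t s ^ 4) (c₁ * (4 * t s ^ 3 * t' s)) s := by
        have := ((ht' s hs).pow 4).const_mul c₁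
        simpa [mul_comm, mul_assoc, mul_left_comm] using this
      have h2 : HasDerivAt (fun s => c₂ * t s ^ 2) (c₂ * (2 * t s * t' s)) s := by
        have := ((ht' s hs).pow 2).const_mul c₂
        simpa [mul_comm, mul_assoc, mul_left_comm] using this
      have := (h4.add h2).add_const 1
      have h' : HasDerivAt (fun s => c₁ * t s ^ 4 + c₂ * t s ^ 2 + 1)
          ((4 * c₁ * t s ^ 3 + 2 * c₂ * t s) * t' s) s := by
        exact this.congr_deriv (by ring)
      exact h'.congr_of_eventuallyEq heq
    have ht''eq : t'' s = (4 * c₁ * t s ^ 3 + 2 * c₂ * t s) * t' s :=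
      (ht'' s hs).unique hD
    have h1 : t s ≠ 0 := htne s hs
    have h2' : c₁ * t s ^ 4 + c₂ * t s ^ 2 + 1 ≠ 0 := by
      rw [← h s hs]; exact ht'ne s hs
    rw [ht''eq, h s hs]
    rw [div_add_div _ _ (mul_ne_zero h1 h2') (pow_ne_zero 2 h1),
      div_eq_iff (mul_ne_zero (mul_ne_zero h1 h2') (pow_ne_zero 2 h1))]
    ring
end

section
/- Let I be an open interval and t : I → ℝ twice continuously differentiable with t(s) > 0 and t′(s) ≤ −1 for all s ∈ I. Then the following are equivalent: (i) the function s ↦ t″(s)/(t(s)·t′(s)) + 4(1 − t′(s))/t(s)² is constant on I; (ii) there exist real constants c₁, c₂ such that t′(s) = c₁·t(s)⁴ + c₂·t(s)² + 1 for all s ∈ I (equivalently, the meridian satisfies s(t) = ∫ dt/(c₁t⁴ + c₂t² + 1)). This is the analytic content of the statement that the Kähler metric of a rotational hypersurface of type III is Bochner-Kähler exactly for these meridians. -/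
/-- for a meridian radius function `t(s) > 0` with `t′(s) ≤ −1`
(rotational hypersurface of type III), the Bochner-flatness condition
"`t″/(t·t′) + 4(1−t′)/t²` is constant" holds iff
`t′ = c₁t⁴ + c₂t² + 1` for some constants `c₁, c₂`
(equivalently, `s(t) = ∫ dt/(c₁t⁴ + c₂t² + 1)`). -/
theorem bochner_meridian_type_III (I : Set ℝ) (hI : IsOpen I) (hIc : I.OrdConnected)
    (t t' t'' : ℝ → ℝ)
    (ht' : ∀ s ∈ I, HasDerivAt t (t' s) s)
    (ht'' : ∀ s ∈ I, HasDerivAt t' (t'' s) s)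
    (hcont : ContinuousOn t'' I)
    (hpos : ∀ s ∈ I, 0 < t s) (hmon : ∀ s ∈ I, t' s ≤ -1) :
    (∃ k : ℝ, ∀ s ∈ I, t'' s / (t s * t' s) + 4 * (1 - t' s) / (t s) ^ 2 = k) ↔
    (∃ c₁ c₂ : ℝ, ∀ s ∈ I, t' s = c₁ * t s ^ 4 + c₂ * t s ^ 2 + 1) := by
  have htne : ∀ s ∈ I, t s ≠ 0 := fun s hs => (hpos s hs).ne'
  have ht'ne : ∀ s ∈ I, t' s ≠ 0 := fun s hs => by
    have := hmon s hs; linarith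
  constructor
  · rintro ⟨k, hk⟩
    rcases Set.eq_empty_or_nonempty I with hemp | ⟨s₀, hs₀⟩
    · exact ⟨0, 0, fun s hs => absurd hs (by simp [hemp])⟩
    set G : ℝ → ℝ := fun s => (t' s - 1) * (t s ^ 4)⁻¹ + (k / 2) * (t s ^ 2)⁻¹ with hGdef
    have hG : ∀ s ∈ I, HasDerivAt G 0 s := by
      intro s hs
      have h4 : t s ^ 4 ≠ 0 := pow_ne_zero _ (htne s hs)
      have h2 : t s ^ 2 ≠ 0 := pow_ne_zero _ (htne s hs)
      have hA : HasDerivAt (fun x => t' x - 1) (t'' s) s := (ht'' s hs).sub_const 1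
      have hB : HasDerivAt (fun x => t x ^ 4) ((4 : ℕ) * t s ^ 3 * t' s) s :=
        (ht' s hs).pow 4
      have hC : HasDerivAt (fun x => t x ^ 2) ((2 : ℕ) * t s ^ 1 * t' s) s :=
        (ht' s hs).pow 2
      have hBi := hB.inv h4
      have hCi := hC.inv h2
      have hD := hA.mul hBi
      have hE := hCi.const_mul (k / 2)
      have hsum := hD.add hE
      refine hsum.congr_deriv ?_
      have hk' := hk s hs
      have ht0 := htne s hs
      have ht'0 := ht'ne s hs
      have hpoly : t'' s * t s + 4 * (1 - t' s) * t' s = k * t s ^ 2 * t' s := by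
        field_simp at hk'
        apply mul_right_cancel₀ ht0
        linear_combination t s * hk'
      simp only [Pi.inv_apply]
      field_simp
      push_cast
      linear_combination 2 * hpoly
    have hconv : Convex ℝ I := Set.OrdConnected.convex hIc
    have hdiff : DifferentiableOn ℝ G I := fun s hs =>
      ((hG s hs).differentiableAt).differentiableWithinAt
    have hfzero : ∀ s ∈ I, fderivWithin ℝ G I s = 0 := by
      intro s hs
      have := ((hG s hs).hasFDerivAt.hasFDerivWithinAt).fderivWithin
        (hI.uniqueDiffOn s hs)
      rw [this]
      ext x
      simp
    have hconst : ∀ s ∈ I, G s = G s₀ := fun s hs =>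
      hconv.is_const_of_fderivWithin_eq_zero hdiff hfzero hs hs₀
    refine ⟨G s₀, -(k / 2), fun s hs => ?_⟩
    have hGs := hconst s hs
    have ht0 := htne s hs
    have : (t' s - 1) * (t s ^ 4)⁻¹ + (k / 2) * (t s ^ 2)⁻¹ = G s₀ := hGs
    field_simp at this
    apply mul_right_cancel₀ (pow_ne_zero 2 ht0)
    linear_combination (t s ^ 2 / 2) * this
  · rintro ⟨c₁, c₂, hc⟩
    refine ⟨-2 * c₂, fun s hs => ?_⟩
    have ht0 := htne s hs
    have ht'0 := ht'ne s hs
    -- t'' s = (4 c₁ t³ + 2 c₂ t) * t'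
    have heq : t'' s = (4 * c₁ * t s ^ 3 + 2 * c₂ * t s) * t' s := by
      have hF : HasDerivAt (fun x => c₁ * t x ^ 4 + c₂ * t x ^ 2 + 1)
          ((4 * c₁ * t s ^ 3 + 2 * c₂ * t s) * t' s) s := by
        have hB : HasDerivAt (fun x => t x ^ 4) ((4 : ℕ) * t s ^ 3 * t' s) s :=
          (ht' s hs).pow 4
        have hC : HasDerivAt (fun x => t x ^ 2) ((2 : ℕ) * t s ^ 1 * t' s) s :=
          (ht' s hs).pow 2
        have := ((hB.const_mul c₁).add (hC.const_mul c₂)).add_const 1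
        refine this.congr_deriv ?_
        push_cast
        ring
      have hcongr : t' =ᶠ[nhds s] fun x => c₁ * t x ^ 4 + c₂ * t x ^ 2 + 1 := by
        filter_upwards [hI.mem_nhds hs] with x hx using hc x hx
      have hF' : HasDerivAt t' ((4 * c₁ * t s ^ 3 + 2 * c₂ * t s) * t' s) s :=
        hF.congr_of_eventuallyEq hcongr
      exact (hF'.unique (ht'' s hs)).symm
    have hcs := hc s hs
    rw [heq]
    field_simp
    ring_nf
    linear_combination -4 * hcs
end

section
/- Let I be an open interval and t : I → ℝ twice differentiable with t(s) > 0 and t′(s) ≥ 1 for all s ∈ I, satisfying t″(s) = 2·t′(s)·(t′(s) − 1)/t(s) on I. Then there exists a constant C ≥ 0 such that t′(s) = 1 + C·t(s)² for all s ∈ I; equivalently, the function a(s) := 4(1 − t′(s))/t(s)² is constant on I, equal to −4C ≤ 0. (This is the meridian equation b = 0 characterizing the rotational hypersurfaces of type II whose Kähler metric has constant holomorphic sectional curvature a = −4C.) -/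
/-- the meridian equation `t″ = 2t′(t′−1)/t` with `t > 0`, `t′ ≥ 1`
(constant holomorphic sectional curvature condition `b = 0` for rotational
hypersurfaces of type II) forces `t′ = 1 + C·t²` for a constant `C ≥ 0`;
equivalently `a(s) = 4(1−t′)/t²` is constant, equal to `−4C`. -/
theorem meridian_b_zero_type_II (I : Set ℝ) (hI : IsOpen I) (hIc : I.OrdConnected)
    (t t' t'' : ℝ → ℝ)
    (ht' : ∀ s ∈ I, HasDerivAt t (t' s) s)
    (ht'' : ∀ s ∈ I, HasDerivAt t' (t'' s) s)
    (hpos : ∀ s ∈ I, 0 < t s) (hmon : ∀ s ∈ I, 1 ≤ t' s)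
    (hode : ∀ s ∈ I, t'' s = 2 * t' s * (t' s - 1) / t s) :
    ∃ C : ℝ, 0 ≤ C ∧ (∀ s ∈ I, t' s = 1 + C * t s ^ 2) ∧
      (∀ s ∈ I, 4 * (1 - t' s) / t s ^ 2 = -(4 * C)) := by
  rcases I.eq_empty_or_nonempty with rfl | ⟨s₀, hs₀⟩
  · exact ⟨0, le_refl _, fun s hs => absurd hs (Set.notMem_empty s),
      fun s hs => absurd hs (Set.notMem_empty s)⟩
  set g : ℝ → ℝ := fun s => (t' s - 1) / (t s) ^ 2 with hg
  have hgder : ∀ s ∈ I, HasDerivAt g 0 s := by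
    intro s hs
    have htne : t s ≠ 0 := (hpos s hs).ne'
    have h1 : HasDerivAt (fun x => t' x - 1) (t'' s) s := (ht'' s hs).sub_const 1
    have h2 : HasDerivAt (fun x => (t x) ^ 2) (2 * t s * t' s) s := by
      have := (ht' s hs).pow 2
      exact this.congr_deriv (by ring)
    have h3 := h1.div h2 (pow_ne_zero 2 htne)
    refine h3.congr_deriv ?_
    rw [hode s hs]
    field_simp
    ring
  have hconv : Convex ℝ I := convex_iff_ordConnected.mpr hIc
  have hdiff : DifferentiableOn ℝ g I := fun s hs =>
    ((hgder s hs).differentiableAt).differentiableWithinAt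
  have hconst : ∀ s ∈ I, g s = g s₀ := by
    intro s hs
    refine hconv.is_const_of_fderivWithin_eq_zero hdiff (fun z hz => ?_) hs hs₀
    rw [fderivWithin_of_isOpen hI hz, (hgder z hz).hasFDerivAt.fderiv]
    ext
    simp
  refine ⟨g s₀, ?_, ?_, ?_⟩
  · have := hconst s₀ hs₀
    exact div_nonneg (by linarith [hmon s₀ hs₀]) (by positivity)
  · intro s hs
    have h := hconst s hs
    have htne : (t s) ^ 2 ≠ 0 := pow_ne_zero 2 (hpos s hs).ne'
    have : t' s - 1 = g s₀ * t s ^ 2 := by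
      rw [← h]; simp only [hg]; field_simp [(hpos s hs).ne']
    linarith
  · intro s hs
    have h := hconst s hs
    have htne : (t s) ^ 2 ≠ 0 := pow_ne_zero 2 (hpos s hs).ne'
    have : t' s - 1 = g s₀ * t s ^ 2 := by
      rw [← h]; simp only [hg]; field_simp [(hpos s hs).ne']
    rw [eq_comm]
    rw [eq_div_iff htne]
    linarith
end

section
/- Let a < 0 and define q(t) = (1/√(−a))·( √(8 − a t²) + ln( (√(8 − a t²) − 2)/(√(8 − a t²) + 2) ) ) for t > 0 (note √(8 − a t²) > 2 so the logarithm is defined). Then q is differentiable on (0,∞) with q′(t) = √(−a)·t·√(8 − a t²)/(4 − a t²) > 0, and setting τ(t) := 1 − (a/4)t² one has q′(t)² = (τ(t)² − 1)/τ(t)². Hence the meridian (t, q(t)) with slope function τ(t) = t′ generates the rotational hypersurface of type II whose Kähler metric has constant holomorphic sectional curvature a. -/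
/-- the explicit meridian of the rotational hypersurface of type II
with constant holomorphic sectional curvature `a < 0`:
`q(t) = (1/√(−a))·( √(8−at²) + ln((√(8−at²)−2)/(√(8−at²)+2)) )` for `t > 0`
has `q′(t) = √(−a)·t·√(8−at²)/(4−at²) > 0`, and with slope function
`τ(t) = 1 − (a/4)t²` one has `q′(t)² = (τ(t)² − 1)/τ(t)²`. -/
theorem meridian_type_II_explicit (a : ℝ) (ha : a < 0) (q : ℝ → ℝ)
    (hq : ∀ t > (0:ℝ), q t =
      (1 / Real.sqrt (-a)) * (Real.sqrt (8 - a * t ^ 2)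
        + Real.log ((Real.sqrt (8 - a * t ^ 2) - 2) / (Real.sqrt (8 - a * t ^ 2) + 2)))) :
    ∀ t > (0:ℝ),
      2 < Real.sqrt (8 - a * t ^ 2) ∧
      HasDerivAt q
        (Real.sqrt (-a) * t * Real.sqrt (8 - a * t ^ 2) / (4 - a * t ^ 2)) t ∧
      0 < Real.sqrt (-a) * t * Real.sqrt (8 - a * t ^ 2) / (4 - a * t ^ 2) ∧
      (Real.sqrt (-a) * t * Real.sqrt (8 - a * t ^ 2) / (4 - a * t ^ 2)) ^ 2
        = ((1 - (a / 4) * t ^ 2) ^ 2 - 1) / (1 - (a / 4) * t ^ 2) ^ 2 := by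
  intro t ht
  have hna : 0 < -a := by linarith
  have hu : 0 < Real.sqrt (-a) := Real.sqrt_pos.2 hna
  have hu2 : Real.sqrt (-a) ^ 2 = -a := Real.sq_sqrt hna.le
  have ht2 : 0 < t ^ 2 := by positivity
  have hpos : 0 < 8 - a * t ^ 2 := by nlinarith
  have hs2 : Real.sqrt (8 - a * t ^ 2) ^ 2 = 8 - a * t ^ 2 := Real.sq_sqrt hpos.le
  have h2s : 2 < Real.sqrt (8 - a * t ^ 2) := by
    have : Real.sqrt 4 < Real.sqrt (8 - a * t ^ 2) :=
      Real.sqrt_lt_sqrt (by norm_num) (by nlinarith)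
    have h4 : Real.sqrt 4 = 2 := by
      rw [show (4:ℝ) = 2 ^ 2 by norm_num, Real.sqrt_sq (by norm_num : (0:ℝ) ≤ 2)]
    linarith
  set u := Real.sqrt (-a) with hudef
  set s := Real.sqrt (8 - a * t ^ 2) with hsdef
  have hs0 : 0 < s := by linarith
  have hden : 0 < 4 - a * t ^ 2 := by nlinarith
  have hsm : s - 2 ≠ 0 := by linarith
  have hsp : s + 2 ≠ 0 := by linarith
  have hne : s ≠ 0 := ne_of_gt hs0
  have hune : u ≠ 0 := ne_of_gt hu
  have hdne : (4 : ℝ) - a * t ^ 2 ≠ 0 := ne_of_gt hden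
  have hau : a = -u ^ 2 := by rw [hu2]; ring
  -- inner derivative
  have hg : HasDerivAt (fun x : ℝ => 8 - a * x ^ 2) (-(a * (2 * t ^ 1))) t :=
    ((hasDerivAt_pow 2 t).const_mul a).const_sub 8
  have hgs : HasDerivAt (fun x : ℝ => Real.sqrt (8 - a * x ^ 2))
      (-(a * (2 * t ^ 1)) / (2 * s)) t := by
    simpa using hg.sqrt (ne_of_gt hpos)
  have hnum : HasDerivAt (fun x : ℝ => Real.sqrt (8 - a * x ^ 2) - 2)
      (-(a * (2 * t ^ 1)) / (2 * s)) t := hgs.sub_const 2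
  have hden' : HasDerivAt (fun x : ℝ => Real.sqrt (8 - a * x ^ 2) + 2)
      (-(a * (2 * t ^ 1)) / (2 * s)) t := hgs.add_const 2
  have hdiv : HasDerivAt (fun x : ℝ =>
      (Real.sqrt (8 - a * x ^ 2) - 2) / (Real.sqrt (8 - a * x ^ 2) + 2))
      ((-(a * (2 * t ^ 1)) / (2 * s) * (s + 2)
        - (s - 2) * (-(a * (2 * t ^ 1)) / (2 * s))) / (s + 2) ^ 2) t :=
    hnum.div hden' hsp
  have hquotpos : (0:ℝ) < (s - 2) / (s + 2) := by
    apply div_pos <;> linarith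
  have hlog : HasDerivAt (fun x : ℝ =>
      Real.log ((Real.sqrt (8 - a * x ^ 2) - 2) / (Real.sqrt (8 - a * x ^ 2) + 2)))
      (((-(a * (2 * t ^ 1)) / (2 * s) * (s + 2)
        - (s - 2) * (-(a * (2 * t ^ 1)) / (2 * s))) / (s + 2) ^ 2)
        / ((s - 2) / (s + 2))) t := hdiv.log (ne_of_gt hquotpos)
  have hf : HasDerivAt (fun x : ℝ => (1 / u) * (Real.sqrt (8 - a * x ^ 2)
      + Real.log ((Real.sqrt (8 - a * x ^ 2) - 2) / (Real.sqrt (8 - a * x ^ 2) + 2))))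
      ((1 / u) * (-(a * (2 * t ^ 1)) / (2 * s)
        + ((-(a * (2 * t ^ 1)) / (2 * s) * (s + 2)
          - (s - 2) * (-(a * (2 * t ^ 1)) / (2 * s))) / (s + 2) ^ 2)
          / ((s - 2) / (s + 2)))) t := (hgs.add hlog).const_mul (1 / u)
  have hDeq : (1 / u) * (-(a * (2 * t ^ 1)) / (2 * s)
        + ((-(a * (2 * t ^ 1)) / (2 * s) * (s + 2)
          - (s - 2) * (-(a * (2 * t ^ 1)) / (2 * s))) / (s + 2) ^ 2)
          / ((s - 2) / (s + 2)))
      = u * t * s / (4 - a * t ^ 2) := by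
    have h4 : (4:ℝ) - a * t ^ 2 = s ^ 2 - 4 := by rw [hs2]; ring
    have hs4 : s ^ 2 - 4 ≠ 0 := by rw [← h4]; exact hdne
    rw [h4, hau]
    field_simp
    ring
  have hqf : HasDerivAt q (u * t * s / (4 - a * t ^ 2)) t := by
    rw [← hDeq]
    apply hf.congr_of_eventuallyEq
    filter_upwards [Ioi_mem_nhds ht] with x hx
    exact hq x hx
  refine ⟨h2s, hqf, ?_, ?_⟩
  · exact div_pos (mul_pos (mul_pos hu ht) hs0) hden
  · have hone : (1:ℝ) - a / 4 * t ^ 2 ≠ 0 := by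
      have : (0:ℝ) < 1 - a / 4 * t ^ 2 := by nlinarith
      exact ne_of_gt this
    rw [div_pow, mul_pow, mul_pow, hs2, hu2]
    field_simp
    ring
end

section
/- Let I be an open interval and t : I → ℝ twice differentiable with t(s) > 0 and t′(s) ≤ −1 for all s ∈ I, satisfying t″(s) = 2·t′(s)·(t′(s) − 1)/t(s) on I. Then there exists a constant C < 0 such that t′(s) = 1 + C·t(s)² for all s ∈ I; equivalently, the function a(s) := 4(t′(s) − 1)/t(s)² is constant on I, equal to 4C < 0, and necessarily t(s)² ≥ −2/C on I. (This is the meridian equation b = 0 characterizing the rotational hypersurfaces of type III whose Kähler metric has constant holomorphic sectional curvature a = 4C.) -/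
/-- the meridian equation `t″ = 2t′(t′−1)/t` with `t > 0`, `t′ ≤ −1`
(constant holomorphic sectional curvature condition `b = 0` for rotational
hypersurfaces of type III) forces `t′ = 1 + C·t²` for a constant `C < 0`;
equivalently `a(s) = 4(t′−1)/t²` is constant, equal to `4C`, and necessarily
`t² ≥ −2/C` on `I`. -/
theorem meridian_b_zero_type_III (I : Set ℝ) (hI : IsOpen I) (hIc : I.OrdConnected)
    (t t' t'' : ℝ → ℝ)
    (ht' : ∀ s ∈ I, HasDerivAt t (t' s) s)
    (ht'' : ∀ s ∈ I, HasDerivAt t' (t'' s) s)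
    (hpos : ∀ s ∈ I, 0 < t s) (hmon : ∀ s ∈ I, t' s ≤ -1)
    (hode : ∀ s ∈ I, t'' s = 2 * t' s * (t' s - 1) / t s) :
    ∃ C : ℝ, C < 0 ∧ (∀ s ∈ I, t' s = 1 + C * t s ^ 2) ∧
      (∀ s ∈ I, 4 * (t' s - 1) / t s ^ 2 = 4 * C) ∧
      (∀ s ∈ I, -2 / C ≤ t s ^ 2) := by
  rcases Set.eq_empty_or_nonempty I with hIe | ⟨s₀, hs₀⟩
  · exact ⟨-1, by norm_num, fun s hs => absurd hs (by simp [hIe]),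
      fun s hs => absurd hs (by simp [hIe]), fun s hs => absurd hs (by simp [hIe])⟩
  set g : ℝ → ℝ := fun s => (t' s - 1) / t s ^ 2 with hg
  have hgderiv : ∀ s ∈ I, HasDerivAt g 0 s := by
    intro s hs
    have htne : t s ≠ 0 := (hpos s hs).ne'
    have h1 : HasDerivAt (fun s => t' s - 1) (t'' s) s := (ht'' s hs).sub_const 1
    have h2 : HasDerivAt (fun s => t s ^ 2) (2 * t s * t' s) s := by
      simpa [mul_comm, mul_assoc] using (ht' s hs).fun_pow 2
    have h3 := h1.fun_div h2 (pow_ne_zero 2 htne)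
    refine h3.congr_deriv ?_
    rw [hode s hs]
    field_simp
    ring
  have hconv : Convex ℝ I := hIc.convex
  have hdiff : DifferentiableOn ℝ g I := fun s hs =>
    ((hgderiv s hs).differentiableAt).differentiableWithinAt
  have hfd : ∀ s ∈ I, fderivWithin ℝ g I s = 0 := by
    intro s hs
    rw [fderivWithin_of_isOpen hI hs]
    rw [(hgderiv s hs).hasFDerivAt.fderiv]
    ext
    simp
  set C := g s₀ with hC
  have hgC : ∀ s ∈ I, g s = C :=
    fun s hs => hconv.is_const_of_fderivWithin_eq_zero hdiff hfd hs hs₀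
  have hCneg : C < 0 := by
    have h := hmon s₀ hs₀
    have hp := hpos s₀ hs₀
    have : t' s₀ - 1 < 0 := by linarith
    exact div_neg_of_neg_of_pos this (by positivity)
  have key : ∀ s ∈ I, t' s = 1 + C * t s ^ 2 := by
    intro s hs
    have htne : t s ≠ 0 := (hpos s hs).ne'
    have := hgC s hs
    rw [hg] at this
    dsimp only at this
    field_simp at this
    linarith
  refine ⟨C, hCneg, key, ?_, ?_⟩
  · intro s hs
    have htne : t s ≠ 0 := (hpos s hs).ne'
    rw [key s hs]
    field_simp
    ring
  · intro s hs
    have h := hmon s hs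
    rw [key s hs] at h
    rw [div_le_iff_of_neg hCneg]
    nlinarith
end

section
/- Let a < 0 and define, for t > 2√2/√(−a), q(t) = (1/(−a))·( √(a(8 + a t²)) − 2√(−a)·arctan( (1/2)·√(−(8 + a t²)) ) ) (note 8 + a t² < 0 on this domain, so a(8 + a t²) > 0 and both square roots are defined). Then q is differentiable with q′(t) = √(−a)·t·√(−(8 + a t²))/(−4 − a t²) > 0, and setting τ(t) := 1 + (a/4)t² ≤ −1 one has q′(t)² = (τ(t)² − 1)/τ(t)². Hence the meridian (t, q(t)) with slope function τ(t) = t′ generates the rotational hypersurface of type III whose Kähler metric has constant holomorphic sectional curvature a. -/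
/-- the explicit meridian of the rotational hypersurface of type III
with constant holomorphic sectional curvature `a < 0`: for `t > 2√2/√(−a)`,
`q(t) = (1/(−a))·( √(a(8+at²)) − 2√(−a)·arctan((1/2)√(−(8+at²))) )`
has `8 + at² < 0`, `q′(t) = √(−a)·t·√(−(8+at²))/(−4−at²) > 0`, and with slope
function `τ(t) = 1 + (a/4)t² ≤ −1` one has `q′(t)² = (τ(t)² − 1)/τ(t)²`. -/
theorem meridian_type_III_explicit (a : ℝ) (ha : a < 0) (q : ℝ → ℝ)
    (hq : ∀ t : ℝ, 2 * Real.sqrt 2 / Real.sqrt (-a) < t → q t =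
      (1 / (-a)) * (Real.sqrt (a * (8 + a * t ^ 2))
        - 2 * Real.sqrt (-a) * Real.arctan ((1 / 2) * Real.sqrt (-(8 + a * t ^ 2))))) :
    ∀ t : ℝ, 2 * Real.sqrt 2 / Real.sqrt (-a) < t →
      8 + a * t ^ 2 < 0 ∧
      HasDerivAt q
        (Real.sqrt (-a) * t * Real.sqrt (-(8 + a * t ^ 2)) / (-4 - a * t ^ 2)) t ∧
      0 < Real.sqrt (-a) * t * Real.sqrt (-(8 + a * t ^ 2)) / (-4 - a * t ^ 2) ∧
      1 + (a / 4) * t ^ 2 ≤ -1 ∧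
      (Real.sqrt (-a) * t * Real.sqrt (-(8 + a * t ^ 2)) / (-4 - a * t ^ 2)) ^ 2
        = ((1 + (a / 4) * t ^ 2) ^ 2 - 1) / (1 + (a / 4) * t ^ 2) ^ 2 := by
  intro t ht
  have ha' : 0 < -a := neg_pos.mpr ha
  have hsa : 0 < Real.sqrt (-a) := Real.sqrt_pos.mpr ha'
  have hsa2 : Real.sqrt (-a) ^ 2 = -a := Real.sq_sqrt ha'.le
  have ht0 : 0 < t := lt_trans (by positivity) ht
  have hu : 8 + a * t ^ 2 < 0 := by
    have h1 : 2 * Real.sqrt 2 < t * Real.sqrt (-a) := by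
      rw [div_lt_iff₀ hsa] at ht; linarith
    have h2 : (2 * Real.sqrt 2) ^ 2 < (t * Real.sqrt (-a)) ^ 2 := by
      apply sq_lt_sq' _ h1
      nlinarith [Real.sqrt_nonneg 2, Real.sqrt_nonneg (-a), ht0]
    rw [mul_pow, mul_pow, Real.sq_sqrt (by norm_num : (0:ℝ) ≤ 2), hsa2] at h2
    nlinarith
  have hD : 0 < -4 - a * t ^ 2 := by nlinarith
  have hsu : 0 < Real.sqrt (-(8 + a * t ^ 2)) := Real.sqrt_pos.mpr (by linarith)
  have hsu2 : Real.sqrt (-(8 + a * t ^ 2)) ^ 2 = -(8 + a * t ^ 2) :=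
    Real.sq_sqrt (by linarith)
  have hau : 0 < a * (8 + a * t ^ 2) := mul_pos_of_neg_of_neg ha hu
  have hsplit : Real.sqrt (a * (8 + a * t ^ 2))
      = Real.sqrt (-a) * Real.sqrt (-(8 + a * t ^ 2)) := by
    rw [← Real.sqrt_mul ha'.le]; ring_nf
  set f : ℝ → ℝ := fun s =>
      (1 / (-a)) * (Real.sqrt (a * (8 + a * s ^ 2))
        - 2 * Real.sqrt (-a) * Real.arctan ((1 / 2) * Real.sqrt (-(8 + a * s ^ 2)))) with hf
  have hu' : HasDerivAt (fun s : ℝ => 8 + a * s ^ 2) (a * (2 * t)) t := by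
    simpa using ((hasDerivAt_pow 2 t).const_mul a).const_add 8
  have h1 : HasDerivAt (fun s : ℝ => Real.sqrt (a * (8 + a * s ^ 2)))
      ((a * (a * (2 * t))) / (2 * Real.sqrt (a * (8 + a * t ^ 2)))) t :=
    (hu'.const_mul a).sqrt (ne_of_gt hau)
  have h2 : HasDerivAt (fun s : ℝ => Real.sqrt (-(8 + a * s ^ 2)))
      ((-(a * (2 * t))) / (2 * Real.sqrt (-(8 + a * t ^ 2)))) t :=
    hu'.neg.sqrt (ne_of_gt (by linarith : (0:ℝ) < -(8 + a * t ^ 2)))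
  have h3 : HasDerivAt
      (fun s : ℝ => Real.arctan ((1 / 2) * Real.sqrt (-(8 + a * s ^ 2))))
      (1 / (1 + ((1 / 2) * Real.sqrt (-(8 + a * t ^ 2))) ^ 2) *
        ((1 / 2) * ((-(a * (2 * t))) / (2 * Real.sqrt (-(8 + a * t ^ 2)))))) t :=
    (h2.const_mul (1 / 2)).arctan
  have hfd : HasDerivAt f
      (Real.sqrt (-a) * t * Real.sqrt (-(8 + a * t ^ 2)) / (-4 - a * t ^ 2)) t := by
    have := ((h1.sub (h3.const_mul (2 * Real.sqrt (-a)))).const_mul (1 / (-a)))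
    refine this.congr_deriv ?_
    symm
    rw [hsplit]
    set S := Real.sqrt (-(8 + a * t ^ 2)) with hS
    set A := Real.sqrt (-a) with hA
    have ha2 : a = -A ^ 2 := by linarith [hsa2]
    have hat : a * t ^ 2 = -8 - S ^ 2 := by linarith [hsu2]
    have hS4 : (0:ℝ) < 4 + S ^ 2 := by positivity
    have hAne : A ≠ 0 := ne_of_gt hsa
    have hSne : S ≠ 0 := ne_of_gt hsu
    rw [hat, ha2]
    have h14 : 1 + (1 / 2 * S) ^ 2 = (4 + S ^ 2) / 4 := by ring
    rw [h14]
    field_simp [ne_of_gt hS4]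
    have hinv : (4 + S ^ 2)⁻¹ * (4 + S ^ 2) = 1 := inv_mul_cancel₀ (ne_of_gt hS4)
    linear_combination (S ^ 2) * hinv
  have hqd : HasDerivAt q
      (Real.sqrt (-a) * t * Real.sqrt (-(8 + a * t ^ 2)) / (-4 - a * t ^ 2)) t := by
    apply hfd.congr_of_eventuallyEq
    have hopen : IsOpen {s : ℝ | 2 * Real.sqrt 2 / Real.sqrt (-a) < s} := isOpen_lt' _
    filter_upwards [hopen.mem_nhds ht] with s hs
    exact hq s hs
  have hτ : 1 + (a / 4) * t ^ 2 ≤ -1 := by nlinarith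
  refine ⟨hu, hqd, by positivity, hτ, ?_⟩
  have hτ0 : 1 + (a / 4) * t ^ 2 ≠ 0 := by linarith
  rw [div_pow, mul_pow, mul_pow, hsa2, hsu2]
  rw [div_eq_div_iff (pow_ne_zero _ (ne_of_gt hD)) (pow_ne_zero _ hτ0)]
  ring
end
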